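/- (Chu's identity.) For every complex number q with |q| < 1 and all nonzero complex numbers b, c, d, α: [d/b, c/b, cd/α, α; q]_∞ − [c, d, α/b, cd/(bα); q]_∞ = c · [cd/b, 1/b, d/α, α/c; q]_∞. -/

import Mathlib

/-- The q-Pochhammer symbol of infinite order: `(x; q)_∞ = ∏_{k=0}^∞ (1 - x q^k)`. -/
noncomputable def qPoch (x q : ℂ) : ℂ := ∏' k : ℕ, (1 - x * q ^ k)

/-- The theta function `[x; q]_∞ = (x;q)_∞ (q/x;q)_∞`. -/
noncomputable def theta (x q : ℂ) : ℂ := qPoch x q * qPoch (q / x) q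

/-!
Fix `q ≠ 0`, `b`, `c`, `d` and let `F(α)` be the difference of the two sides and
`D(α) = [α/c, qα/d; q]_∞`. By `[qx; q]_∞ = -x⁻¹ [x; q]_∞`, both `F` and `D` get multiplied by
`cd/(qα²)` under `α ↦ qα`. Since `F(c) = F(d) = 0`, `F` vanishes on all zeros `c q^ℤ ∪ d q^ℤ` of
`D`, and these zeros are simple when `c ∉ d q^ℤ`. Then `F / D` extends to a holomorphic
`q`-invariant function on `ℂ^×`, which is bounded (it is so on the annulus `|q| ≤ |α| ≤ 1`) and
hence constant by Liouville's theorem. If moreover `c, d ∉ q^ℤ`, then `D(1) ≠ 0 = F(1)`, so the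
constant is `0`. The excluded values of `c` and `d` form countable sets, and continuity of `F` in
`c` and in `d` removes them.
-/

open Filter Topology Set

lemma zpow_mul_of_mul_iff {G₀ : Type*} [GroupWithZero G₀] {P : G₀ → Prop} {q : G₀} (hq0 : q ≠ 0)
    (hP : ∀ z, z ≠ 0 → (P (q * z) ↔ P z)) {u : G₀} (hu : u ≠ 0) (hPu : P u) (n : ℤ) :
    P (q ^ n * u) := by
  induction n using Int.induction_on with
  | zero => simpa using hPu
  | succ n ih =>
    rw [add_comm, zpow_one_add₀ hq0, mul_assoc]
    exact (hP _ (mul_ne_zero (zpow_ne_zero _ hq0) hu)).2 ih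
  | pred n ih =>
    rw [← add_sub_cancel 1 (-(n : ℤ)), zpow_one_add₀ hq0, mul_assoc] at ih
    exact (hP _ (mul_ne_zero (zpow_ne_zero _ hq0) hu)).1 ih

lemma ContinuousAt.eq_of_forall_notMem_countable {X : Type*} [TopologicalSpace X] [T1Space X]
    {f : ℂ → X} {S : Set ℂ} (hS : S.Countable) {x : ℂ} {a : X} (hf : ContinuousAt f x)
    (h : ∀ y ∉ S, f y = a) : f x = a := by
  have hx : f x ∈ closure (f '' Sᶜ) :=
    mem_closure_image hf ((hS.dense_compl ℂ).closure_eq ▸ mem_univ x)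
  simpa using closure_mono (image_subset_iff (t := {a}).2 fun y hy ↦ h y hy) hx

lemma apply_eq_apply_of_bounded_of_differentiableOn_compl_zero {f : ℂ → ℂ} {M : ℝ}
    (hf : DifferentiableOn ℂ f {0}ᶜ) (hM : ∀ z, z ≠ 0 → ‖f z‖ ≤ M) {z w : ℂ} (hz : z ≠ 0)
    (hw : w ≠ 0) : f z = f w := by
  set F := Function.update f 0 (limUnder (𝓝[≠] 0) f)
  have hF : Differentiable ℂ F := by
    refine differentiableOn_univ.1 (Complex.differentiableOn_update_limUnder_of_bddAbove
      univ_mem (by rwa [← compl_eq_univ_sdiff]) ⟨M, ?_⟩)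
    rintro _ ⟨y, hy, rfl⟩
    exact hM y hy.2
  have hFbdd : Bornology.IsBounded (range F) := by
    refine isBounded_iff_forall_norm_le.2 ⟨max ‖F 0‖ M, ?_⟩
    rintro _ ⟨y, rfl⟩
    rcases eq_or_ne y 0 with rfl | hy
    · exact le_max_left _ _
    · rw [show F y = f y from Function.update_of_ne hy _ _]
      exact (hM y hy).trans (le_max_right _ _)
  calc f z = F z := (Function.update_of_ne hz _ _).symm
    _ = F w := hF.apply_eq_apply_of_bounded hFbdd z w
    _ = f w := Function.update_of_ne hw _ _

section Liouville

variable {q : ℂ} (hq0 : q ≠ 0) (hq : ‖q‖ < 1) {f : ℂ → ℂ}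
include hq0 hq

lemma exists_bound_of_mul_invariant (hf : ContinuousOn f {0}ᶜ)
    (hinv : ∀ z, z ≠ 0 → f (q * z) = f z) : ∃ M, ∀ z, z ≠ 0 → ‖f z‖ ≤ M := by
  set A : Set ℂ := Metric.closedBall 0 1 ∩ {y | ‖q‖ ≤ ‖y‖}
  have hA0 : A ⊆ {0}ᶜ := fun y hy ↦ norm_pos_iff.1 ((norm_pos_iff.2 hq0).trans_le hy.2)
  obtain ⟨M, hM⟩ := ((isCompact_closedBall 0 1).inter_right
    (isClosed_le continuous_const continuous_norm)).exists_bound_of_continuousOn (hf.mono hA0)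
  refine ⟨M, fun z hz ↦ ?_⟩
  have hr : 0 < ‖q‖ := norm_pos_iff.2 hq0
  obtain ⟨n, hn₁, hn₂⟩ := exists_mem_Ioc_zpow (norm_pos_iff.2 hz) (one_lt_inv_iff₀.2 ⟨hr, hq⟩)
  have ht : 0 < ‖q‖ ^ n := zpow_pos hr n
  rw [inv_zpow] at hn₁ hn₂
  rw [zpow_add_one₀ hr.ne'] at hn₂
  have hmem : q ^ (n + 1) * z ∈ A := by
    have h₁ := mul_lt_mul_of_pos_left hn₁ ht
    have h₂ := mul_le_mul_of_nonneg_left hn₂ (mul_pos ht hr).le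
    rw [mul_inv_cancel₀ ht.ne'] at h₁
    rw [mul_inv_cancel₀ (mul_pos ht hr).ne'] at h₂
    simp only [A, mem_inter_iff, Metric.mem_closedBall, dist_zero_right, mem_ofPred_eq,
      norm_mul, norm_zpow, zpow_add_one₀ hr.ne']
    constructor <;> nlinarith
  rw [← zpow_mul_of_mul_iff (P := fun y ↦ f y = f z) hq0 (fun y hy ↦ by rw [hinv y hy]) hz rfl
    (n + 1)]
  exact hM _ hmem

lemma apply_eq_apply_of_mul_invariant (hf : DifferentiableOn ℂ f {0}ᶜ)
    (hinv : ∀ z, z ≠ 0 → f (q * z) = f z) {z w : ℂ} (hz : z ≠ 0) (hw : w ≠ 0) : f z = f w :=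
  have ⟨_, hM⟩ := exists_bound_of_mul_invariant hq0 hq hf.continuousOn hinv
  apply_eq_apply_of_bounded_of_differentiableOn_compl_zero hf hM hz hw

end Liouville

noncomputable def lhopitalQuotient (f g : ℂ → ℂ) (z : ℂ) : ℂ :=
  if g z = 0 then deriv f z / deriv g z else f z / g z

lemma differentiableAt_lhopitalQuotient {f g : ℂ → ℂ} {z₀ : ℂ} {U : Set ℂ} (hU : U ∈ 𝓝 z₀)
    (hf : DifferentiableOn ℂ f U) (hg : DifferentiableOn ℂ g U)
    (hzero : g z₀ = 0 → f z₀ = 0 ∧ deriv g z₀ ≠ 0) :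
    DifferentiableAt ℂ (lhopitalQuotient f g) z₀ := by
  by_cases hg₀ : g z₀ = 0
  -- near a simple common zero `z₀`, the quotient is `dslope f z₀ / dslope g z₀`
  · obtain ⟨hf₀, hg'⟩ := hzero hg₀
    have hsf := ((Complex.differentiableOn_dslope hU).2 hf).differentiableAt hU
    have hsg := ((Complex.differentiableOn_dslope hU).2 hg).differentiableAt hU
    have hsg₀ : dslope g z₀ z₀ ≠ 0 := by rwa [dslope_same]
    refine (hsf.div hsg hsg₀).congr_of_eventuallyEq ?_
    filter_upwards [hsg.continuousAt.eventually_ne hsg₀] with z hz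
    rcases eq_or_ne z z₀ with rfl | hne
    · simp [lhopitalQuotient, hg₀, dslope_same]
    · have hgz : g z = (z - z₀) * dslope g z₀ z := by
        simpa [hg₀] using (sub_smul_dslope g z₀ z).symm
      have hfz : f z = (z - z₀) * dslope f z₀ z := by
        simpa [hf₀] using (sub_smul_dslope f z₀ z).symm
      have hgz0 : g z ≠ 0 := by rw [hgz]; exact mul_ne_zero (sub_ne_zero.2 hne) hz
      rw [lhopitalQuotient, if_neg hgz0, hfz, hgz]
      exact mul_div_mul_left _ _ (sub_ne_zero.2 hne)
  · have hgd := hg.differentiableAt hU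
    refine ((hf.differentiableAt hU).div hgd hg₀).congr_of_eventuallyEq ?_
    filter_upwards [hgd.continuousAt.eventually_ne hg₀] with z hz
    simp [lhopitalQuotient, hz]

section qPoch

variable {q : ℂ} (hq : ‖q‖ < 1)
include hq

lemma summable_norm_mul_pow (x : ℂ) : Summable fun k : ℕ ↦ ‖x * q ^ k‖ := by
  simpa using (summable_geometric_of_lt_one (norm_nonneg q) hq).mul_left ‖x‖

lemma multipliable_qPoch (x : ℂ) : Multipliable fun k : ℕ ↦ 1 - x * q ^ k := by
  simp_rw [sub_eq_add_neg]
  have hs : Summable fun k : ℕ ↦ ‖-(x * q ^ k)‖ := by simpa using summable_norm_mul_pow hq x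
  exact multipliable_one_add_of_summable (f := fun k : ℕ ↦ -(x * q ^ k)) hs

lemma qPoch_eq_one_sub_mul (x : ℂ) : qPoch x q = (1 - x) * qPoch (q * x) q := by
  have hshift : (fun k : ℕ ↦ 1 - x * q ^ (k + 1)) = fun k ↦ 1 - q * x * q ^ k := by
    ext k; ring
  have h := tprod_eq_zero_mul' (f := fun k : ℕ ↦ 1 - x * q ^ k)
    (by rw [hshift]; exact multipliable_qPoch hq (q * x))
  rw [qPoch, h, hshift, pow_zero, mul_one, qPoch]

lemma qPoch_ne_zero {x : ℂ} (hx : ∀ k : ℕ, x * q ^ k ≠ 1) : qPoch x q ≠ 0 := by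
  simpa [qPoch, sub_eq_add_neg] using tprod_one_add_ne_zero_of_summable
    (f := fun k ↦ -(x * q ^ k))
    (fun k ↦ by simpa [← sub_eq_add_neg, sub_eq_zero] using (hx k).symm)
    (by simpa using summable_norm_mul_pow hq x)

lemma differentiable_qPoch : Differentiable ℂ fun x ↦ qPoch x q := by
  intro z
  set R := ‖z‖ + 1
  have hprod : HasProdLocallyUniformlyOn (fun k x ↦ 1 + -(x * q ^ k)) (fun x ↦ qPoch x q)
      (Metric.ball 0 R) := by
    simp_rw [qPoch, sub_eq_add_neg]
    refine ((summable_geometric_of_lt_one (norm_nonneg q) hq).mul_left R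
      ).hasProdLocallyUniformlyOn_nat_one_add Metric.isOpen_ball
      (.of_forall fun k x hx ↦ ?_) (fun k ↦ by fun_prop)
    rw [norm_neg, norm_mul, norm_pow]
    exact mul_le_mul_of_nonneg_right (by simpa using (mem_ball_zero_iff.1 hx).le) (by positivity)
  refine (hprod.differentiableOn (.of_forall fun s ↦ ?_) Metric.isOpen_ball).differentiableAt
    (Metric.isOpen_ball.mem_nhds (by simp [R]))
  simpa [Finset.prod_fn] using DifferentiableOn.finsetProd (fun _ _ ↦ by fun_prop)

end qPoch

section theta

variable {q : ℂ} (hq : ‖q‖ < 1)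
include hq

lemma theta_one : theta 1 q = 0 := by
  rw [theta, qPoch_eq_one_sub_mul hq 1, sub_self, zero_mul, zero_mul]

lemma theta_eq_one_sub_mul (x : ℂ) :
    theta x q = (1 - x) * (qPoch (q * x) q * qPoch (q / x) q) := by
  rw [theta, qPoch_eq_one_sub_mul hq x, mul_assoc]

lemma mul_theta_inv {x : ℂ} (hx : x ≠ 0) : x * theta x⁻¹ q = -theta x q := by
  rw [theta_eq_one_sub_mul hq, theta_eq_one_sub_mul hq, div_inv_eq_mul, ← div_eq_mul_inv]
  field_simp
  ring

lemma mul_theta_q_mul (hq0 : q ≠ 0) {x : ℂ} (hx : x ≠ 0) :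
    x * theta (q * x) q = -theta x q := by
  rw [theta, theta_eq_one_sub_mul hq, div_mul_cancel_left₀ hq0, qPoch_eq_one_sub_mul hq x⁻¹,
    ← div_eq_mul_inv]
  field_simp
  ring

lemma theta_q_mul (hq0 : q ≠ 0) {x : ℂ} (hx : x ≠ 0) : theta (q * x) q = -theta x q / x := by
  rw [eq_div_iff hx, mul_comm, mul_theta_q_mul hq hq0 hx]

lemma theta_div_q (hq0 : q ≠ 0) {x : ℂ} (hx : x ≠ 0) :
    theta (x / q) q = -(x / q) * theta x q := by
  have h := mul_theta_q_mul hq hq0 (div_ne_zero hx hq0)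
  rw [mul_div_cancel₀ x hq0] at h
  linear_combination h

lemma exists_eq_zpow_of_theta_eq_zero {x : ℂ} (h : theta x q = 0) : ∃ n : ℤ, x = q ^ n := by
  by_contra! hx
  refine mul_ne_zero (qPoch_ne_zero hq fun k hk ↦ hx (-k) ?_)
    (qPoch_ne_zero hq fun k hk ↦ hx (k + 1) ?_) h
  · rw [zpow_neg, zpow_natCast]
    exact eq_inv_of_mul_eq_one_left hk
  · have hx0 : x ≠ 0 := by rintro rfl; simp at hk
    field_simp at hk
    rw [show (k : ℤ) + 1 = ((k + 1 : ℕ) : ℤ) by push_cast; ring, zpow_natCast, pow_succ']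
    exact hk.symm

@[fun_prop]
lemma DifferentiableAt.theta {f : ℂ → ℂ} {z : ℂ} (hf : DifferentiableAt ℂ f z) (hz : f z ≠ 0) :
    DifferentiableAt ℂ (fun y ↦ theta (f y) q) z := by
  have hθ : DifferentiableAt ℂ (fun x ↦ _root_.theta x q) (f z) :=
    (differentiable_qPoch hq _).mul ((differentiable_qPoch hq _).comp _
      ((differentiableAt_const q).div differentiableAt_id hz))
  exact hθ.comp z hf

@[fun_prop]
lemma ContinuousAt.theta {f : ℂ → ℂ} {z : ℂ} (hf : ContinuousAt f z) (hz : f z ≠ 0) :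
    ContinuousAt (fun y ↦ theta (f y) q) z :=
  (differentiableAt_id.theta hq hz).continuousAt.comp (f := f) hf

lemma hasDerivAt_theta_one : HasDerivAt (theta · q) (-qPoch q q ^ 2) 1 := by
  have hP : DifferentiableAt ℂ (fun x ↦ qPoch (q * x) q * qPoch (q / x) q) 1 := by
    have := differentiable_qPoch hq
    fun_prop (disch := norm_num)
  have h := ((hasDerivAt_id (1 : ℂ)).const_sub 1).mul hP.hasDerivAt
  simp only [id, sub_self, zero_mul, mul_one, div_one] at h
  exact (h.congr_of_eventuallyEq (.of_forall (theta_eq_one_sub_mul hq))).congr_deriv (by ring)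

lemma mul_deriv_theta_q_mul (hq0 : q ≠ 0) {x : ℂ} (hx : x ≠ 0) (h0 : theta x q = 0) :
    q * x * deriv (theta · q) (q * x) = -deriv (theta · q) x := by
  have hθ : ∀ {y : ℂ}, y ≠ 0 → DifferentiableAt ℂ (theta · q) y := fun hy ↦
    differentiableAt_id.theta hq hy
  have hqx : theta (q * x) q = 0 := by
    simpa [h0, hx] using mul_theta_q_mul hq hq0 hx
  have h1 := (hasDerivAt_id x).mul ((hθ (mul_ne_zero hq0 hx)).hasDerivAt.comp x
    ((hasDerivAt_id x).const_mul q))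
  have h2 : (fun y ↦ y * theta (q * y) q) =ᶠ[𝓝 x] fun y ↦ -theta y q := by
    filter_upwards [isOpen_ne.mem_nhds hx] with y hy using mul_theta_q_mul hq hq0 hy
  have := (h1.congr_of_eventuallyEq h2.symm).unique (hθ hx).hasDerivAt.neg
  simp only [id, hqx, Function.comp_def] at this
  linear_combination this

lemma theta_zpow_eq_zero_and_deriv_ne_zero (hq0 : q ≠ 0) (n : ℤ) :
    theta (q ^ n) q = 0 ∧ deriv (theta · q) (q ^ n) ≠ 0 := by
  have hinv : ∀ z, z ≠ 0 → ((theta (q * z) q = 0 ∧ deriv (theta · q) (q * z) ≠ 0) ↔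
      (theta z q = 0 ∧ deriv (theta · q) z ≠ 0)) := by
    intro z hz
    have hzero : theta (q * z) q = 0 ↔ theta z q = 0 := by
      rw [← neg_eq_zero (a := theta z q), ← mul_theta_q_mul hq hq0 hz, mul_eq_zero,
        or_iff_right hz]
    rw [hzero]
    refine and_congr_right fun h0 ↦ ?_
    rw [← neg_ne_zero (a := deriv (theta · q) z), ← mul_deriv_theta_q_mul hq hq0 hz h0]
    simp [hq0, hz]
  have h1 : theta 1 q = 0 ∧ deriv (theta · q) 1 ≠ 0 := by
    refine ⟨theta_one hq, ?_⟩
    rw [(hasDerivAt_theta_one hq).deriv, neg_ne_zero]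
    refine pow_ne_zero 2 (qPoch_ne_zero hq fun k hk ↦ ?_)
    have : ‖q * q ^ k‖ < 1 := by
      rw [norm_mul, norm_pow]
      exact mul_lt_one_of_nonneg_of_lt_one_left (norm_nonneg q) hq
        (pow_le_one₀ (norm_nonneg q) hq.le)
    simp [hk] at this
  simpa using zpow_mul_of_mul_iff (P := fun z ↦ theta z q = 0 ∧ deriv (theta · q) z ≠ 0)
    hq0 hinv one_ne_zero h1 n

end theta

lemma theta_zero_right (x : ℂ) : theta x 0 = 1 - x := by
  have h : ∀ y : ℂ, qPoch y 0 = 1 - y := fun y ↦ by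
    rw [qPoch, tprod_eq_prod (s := {0}) fun k hk ↦ by simp [zero_pow (by simpa using hk)]]
    simp
  rw [theta, h, zero_div, h, sub_zero, mul_one]

noncomputable def chuDefect (q b c d α : ℂ) : ℂ :=
  theta (d / b) q * theta (c / b) q * theta (c * d / α) q * theta α q
    - theta c q * theta d q * theta (α / b) q * theta (c * d / (b * α)) q
    - c * (theta (c * d / b) q * theta (1 / b) q * theta (d / α) q * theta (α / c) q)

noncomputable def chuDenom (q c d α : ℂ) : ℂ := theta (α / c) q * theta (q * α / d) q

noncomputable def chuQuotient (q b c d : ℂ) : ℂ → ℂ :=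
  lhopitalQuotient (chuDefect q b c d) (chuDenom q c d)

section chu

variable {q b c d : ℂ} (hq : ‖q‖ < 1) (hq0 : q ≠ 0) (hb : b ≠ 0) (hc : c ≠ 0) (hd : d ≠ 0)

include hq hq0 hb hc hd in
lemma chuDefect_q_mul {α : ℂ} (hα : α ≠ 0) :
    q * α ^ 2 * chuDefect q b c d (q * α) = c * d * chuDefect q b c d α := by
  rw [chuDefect, chuDefect, show c * d / (q * α) = c * d / α / q by ring,
    show q * α / b = q * (α / b) by ring,
    show c * d / (b * (q * α)) = c * d / (b * α) / q by ring,
    show d / (q * α) = d / α / q by ring, show q * α / c = q * (α / c) by ring,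
    theta_div_q hq hq0 (by positivity), theta_div_q hq hq0 (by positivity),
    theta_div_q hq hq0 (by positivity), theta_q_mul hq hq0 hα,
    theta_q_mul hq hq0 (by positivity), theta_q_mul hq hq0 (by positivity)]
  field_simp

include hq hq0 hc hd in
lemma chuDenom_q_mul {α : ℂ} (hα : α ≠ 0) :
    q * α ^ 2 * chuDenom q c d (q * α) = c * d * chuDenom q c d α := by
  rw [chuDenom, chuDenom, show q * α / c = q * (α / c) by ring,
    show q * (q * α) / d = q * (q * α / d) by ring, theta_q_mul hq hq0 (by positivity),
    theta_q_mul hq hq0 (by positivity)]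
  field_simp

include hq hc in
lemma chuDefect_one : chuDefect q b c d 1 = 0 := by
  have h := mul_theta_inv hq hc
  rw [chuDefect, theta_one hq, one_div c]
  simp only [mul_one, div_one]
  linear_combination (-theta (c * d / b) q * theta (1 / b) q * theta d q) * h

include hq hc in
lemma chuDefect_self_left : chuDefect q b c d c = 0 := by
  rw [chuDefect, div_self hc, theta_one hq, mul_div_cancel_left₀ d hc,
    show c * d / (b * c) = d / b by rw [mul_comm c, mul_div_mul_right d b hc]]
  ring

include hq hd in
lemma chuDefect_self_right : chuDefect q b c d d = 0 := by
  rw [chuDefect, div_self hd, theta_one hq, mul_div_cancel_right₀ c hd,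
    mul_div_mul_right c b hd]
  ring

include hq hq0 hb hc hd in
lemma chuDefect_zpow_mul_eq_zero {u : ℂ} (hu : u ≠ 0) (h : chuDefect q b c d u = 0) (n : ℤ) :
    chuDefect q b c d (q ^ n * u) = 0 := by
  refine zpow_mul_of_mul_iff (P := fun z ↦ chuDefect q b c d z = 0) hq0 (fun z hz ↦ ?_) hu h n
  rw [← mul_right_inj' (by positivity : q * z ^ 2 ≠ 0), chuDefect_q_mul hq hq0 hb hc hd hz,
    mul_zero, mul_eq_zero, or_iff_right (by positivity)]

include hq hq0 hc hd in
lemma chuDenom_eq_zero {α : ℂ} (h : chuDenom q c d α = 0) :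
    (∃ n : ℤ, α = q ^ n * c) ∨ ∃ n : ℤ, α = q ^ n * d := by
  rcases mul_eq_zero.1 h with h | h
  · obtain ⟨n, hn⟩ := exists_eq_zpow_of_theta_eq_zero hq h
    exact .inl ⟨n, by rw [← hn, div_mul_cancel₀ α hc]⟩
  · obtain ⟨n, hn⟩ := exists_eq_zpow_of_theta_eq_zero hq h
    refine .inr ⟨n - 1, ?_⟩
    rw [zpow_sub_one₀ hq0, ← hn]
    field_simp

include hq hq0 hc hd in
lemma countable_setOf_chuDenom_eq_zero : {α | chuDenom q c d α = 0}.Countable := by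
  refine ((countable_range fun n : ℤ ↦ q ^ n * c).union
    (countable_range fun n : ℤ ↦ q ^ n * d)).mono fun α hα ↦ ?_
  rcases chuDenom_eq_zero hq hq0 hc hd hα with ⟨n, rfl⟩ | ⟨n, rfl⟩
  · exact .inl ⟨n, rfl⟩
  · exact .inr ⟨n, rfl⟩

include hq hq0 hb hc hd in
lemma chuDefect_eq_zero_of_chuDenom_eq_zero {α : ℂ} (h : chuDenom q c d α = 0) :
    chuDefect q b c d α = 0 := by
  rcases chuDenom_eq_zero hq hq0 hc hd h with ⟨n, rfl⟩ | ⟨n, rfl⟩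
  · exact chuDefect_zpow_mul_eq_zero hq hq0 hb hc hd hc (chuDefect_self_left hq hc) n
  · exact chuDefect_zpow_mul_eq_zero hq hq0 hb hc hd hd (chuDefect_self_right hq hd) n

include hq hq0 hc hd in
lemma deriv_chuDenom_ne_zero (hcd : ∀ n : ℤ, q ^ n * d ≠ c) {α : ℂ} (hα : α ≠ 0)
    (h : chuDenom q c d α = 0) : deriv (chuDenom q c d) α ≠ 0 := by
  have hθ : ∀ {x : ℂ}, x ≠ 0 → DifferentiableAt ℂ (theta · q) x := fun hx ↦
    differentiableAt_id.theta hq hx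
  have h₁ : HasDerivAt (fun y ↦ theta (y / c) q) (deriv (theta · q) (α / c) * (1 / c)) α := by
    simpa [Function.comp_def] using
      (hθ (div_ne_zero hα hc)).hasDerivAt.comp α ((hasDerivAt_id α).div_const c)
  have h₂ : HasDerivAt (fun y ↦ theta (q * y / d) q)
      (deriv (theta · q) (q * α / d) * (q * 1 / d)) α := by
    simpa [Function.comp_def] using (hθ (x := q * α / d) (by positivity)).hasDerivAt.comp α
      (((hasDerivAt_id α).const_mul q).div_const d)
  rw [show chuDenom q c d = fun y ↦ theta (y / c) q * theta (q * y / d) q from rfl,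
    (h₁.fun_mul h₂).deriv]
  rcases chuDenom_eq_zero hq hq0 hc hd h with ⟨n, rfl⟩ | ⟨n, rfl⟩
  · have h₃ : theta (q * (q ^ n * c) / d) q ≠ 0 := by
      intro h0
      obtain ⟨m, hm⟩ := exists_eq_zpow_of_theta_eq_zero hq h0
      apply hcd (m - 1 - n)
      rw [zpow_sub₀ hq0, zpow_sub_one₀ hq0, ← hm]
      field_simp
    rw [mul_div_cancel_right₀ _ hc, (theta_zpow_eq_zero_and_deriv_ne_zero hq hq0 n).1]
    simpa [hc, h₃] using (theta_zpow_eq_zero_and_deriv_ne_zero hq hq0 n).2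
  · have h₃ : theta (q ^ n * d / c) q ≠ 0 := by
      intro h0
      obtain ⟨m, hm⟩ := exists_eq_zpow_of_theta_eq_zero hq h0
      apply hcd (n - m)
      rw [zpow_sub₀ hq0, ← hm]
      field_simp
    rw [show q * (q ^ n * d) / d = q ^ (n + 1) by rw [zpow_add_one₀ hq0]; field_simp,
      (theta_zpow_eq_zero_and_deriv_ne_zero hq hq0 (n + 1)).1]
    simpa [hd, hq0, h₃] using (theta_zpow_eq_zero_and_deriv_ne_zero hq hq0 (n + 1)).2

include hq hq0 hd in
lemma chuDenom_one_ne_zero (hc' : ∀ n : ℤ, q ^ n ≠ c) (hd' : ∀ n : ℤ, q ^ n ≠ d) :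
    chuDenom q c d 1 ≠ 0 := by
  refine mul_ne_zero (fun h ↦ ?_) (fun h ↦ ?_)
  · obtain ⟨n, hn⟩ := exists_eq_zpow_of_theta_eq_zero hq h
    exact hc' (-n) (by rw [zpow_neg, ← hn, one_div, inv_inv])
  · obtain ⟨n, hn⟩ := exists_eq_zpow_of_theta_eq_zero hq h
    refine hd' (1 - n) ?_
    rw [zpow_sub₀ hq0, ← hn, zpow_one]
    field_simp

include hq hb hc hd in
lemma differentiableAt_chuDefect {α : ℂ} (hα : α ≠ 0) :
    DifferentiableAt ℂ (chuDefect q b c d) α := by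
  unfold chuDefect
  fun_prop (disch := simp [*])

include hq hq0 hc hd in
lemma differentiableAt_chuDenom {α : ℂ} (hα : α ≠ 0) :
    DifferentiableAt ℂ (chuDenom q c d) α := by
  unfold chuDenom
  fun_prop (disch := simp [*])

include hq hb hc hd in
lemma continuousAt_chuDefect_left {α : ℂ} (hα : α ≠ 0) :
    ContinuousAt (fun c ↦ chuDefect q b c d α) c := by
  unfold chuDefect
  fun_prop (disch := simp [*])

include hq hb hc hd in
lemma continuousAt_chuDefect_right {α : ℂ} (hα : α ≠ 0) :
    ContinuousAt (fun d ↦ chuDefect q b c d α) d := by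
  unfold chuDefect
  fun_prop (disch := simp [*])

variable (hcd : ∀ n : ℤ, q ^ n * d ≠ c)

include hq hq0 hb hc hd hcd in
lemma differentiableAt_chuQuotient {α : ℂ} (hα : α ≠ 0) :
    DifferentiableAt ℂ (chuQuotient q b c d) α :=
  differentiableAt_lhopitalQuotient (isOpen_ne.mem_nhds hα)
    (fun _ hz ↦ (differentiableAt_chuDefect hq hb hc hd hz).differentiableWithinAt)
    (fun _ hz ↦ (differentiableAt_chuDenom hq hq0 hc hd hz).differentiableWithinAt)
    fun h ↦ ⟨chuDefect_eq_zero_of_chuDenom_eq_zero hq hq0 hb hc hd h,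
      deriv_chuDenom_ne_zero hq hq0 hc hd hcd hα h⟩

include hq hq0 hb hc hd hcd in
lemma chuQuotient_q_mul {α : ℂ} (hα : α ≠ 0) :
    chuQuotient q b c d (q * α) = chuQuotient q b c d α := by
  refine sub_eq_zero.1 <| ContinuousAt.eq_of_forall_notMem_countable
    (f := fun y ↦ chuQuotient q b c d (q * y) - chuQuotient q b c d y)
    ((countable_setOf_chuDenom_eq_zero hq hq0 hc hd).insert 0)
    (((differentiableAt_chuQuotient hq hq0 hb hc hd hcd (mul_ne_zero hq0 hα)).continuousAt.comp
      (continuous_const_mul q).continuousAt).sub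
      (differentiableAt_chuQuotient hq hq0 hb hc hd hcd hα).continuousAt) fun y hy ↦ ?_
  simp only [mem_insert_iff, mem_ofPred_eq, not_or] at hy
  obtain ⟨hy0, hDy⟩ := hy
  have hDq := chuDenom_q_mul hq hq0 hc hd hy0
  have hDqy : chuDenom q c d (q * y) ≠ 0 := by
    intro h0
    rw [h0, mul_zero, eq_comm] at hDq
    exact hDy ((mul_eq_zero.1 hDq).resolve_left (by positivity))
  simp only [chuQuotient, lhopitalQuotient, if_neg hDqy, if_neg hDy, sub_eq_zero]
  rw [div_eq_div_iff hDqy hDy]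
  refine mul_left_cancel₀ (mul_ne_zero hq0 (pow_ne_zero 2 hy0)) ?_
  linear_combination chuDenom q c d y * chuDefect_q_mul hq hq0 hb hc hd hy0
    - chuDefect q b c d y * hDq

include hq hq0 hb hc hd hcd in
lemma chuDefect_eq_zero_of_generic (hc' : ∀ n : ℤ, q ^ n ≠ c) (hd' : ∀ n : ℤ, q ^ n ≠ d)
    {α : ℂ} (hα : α ≠ 0) : chuDefect q b c d α = 0 := by
  by_cases hD : chuDenom q c d α = 0
  · exact chuDefect_eq_zero_of_chuDenom_eq_zero hq hq0 hb hc hd hD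
  have hconst := apply_eq_apply_of_mul_invariant hq0 hq
    (fun z hz ↦ (differentiableAt_chuQuotient hq hq0 hb hc hd hcd hz).differentiableWithinAt)
    (fun z hz ↦ chuQuotient_q_mul hq hq0 hb hc hd hcd hz) hα one_ne_zero
  simpa [chuQuotient, lhopitalQuotient, hD, chuDenom_one_ne_zero hq hq0 hd hc' hd',
    chuDefect_one hq hc] using hconst

include hq hq0 hb hc hd in
lemma chuDefect_eq_zero {α : ℂ} (hα : α ≠ 0) : chuDefect q b c d α = 0 := by
  have generic_d : ∀ d, d ≠ 0 → (∀ n : ℤ, q ^ n ≠ d) → chuDefect q b c d α = 0 := by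
    intro d hd hd'
    refine (continuousAt_chuDefect_left hq hb hc hd hα).eq_of_forall_notMem_countable
      (((countable_range fun n : ℤ ↦ q ^ n).union
        (countable_range fun n : ℤ ↦ q ^ n * d)).insert 0) fun c hc ↦ ?_
    simp only [mem_insert_iff, mem_union, mem_range, not_or, not_exists] at hc
    exact chuDefect_eq_zero_of_generic hq hq0 hb hc.1 hd hc.2.2 hc.2.1 hd' hα
  refine (continuousAt_chuDefect_right hq hb hc hd hα).eq_of_forall_notMem_countable
    ((countable_range fun n : ℤ ↦ q ^ n).insert 0) fun d hd ↦ ?_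
  simp only [mem_insert_iff, mem_range, not_or, not_exists] at hd
  exact generic_d d hd.1 hd.2

end chu

/-- Chu's identity:
`[d/b, c/b, cd/α, α; q]_∞ − [c, d, α/b, cd/(bα); q]_∞ = c [cd/b, 1/b, d/α, α/c; q]_∞`. -/
theorem chu_identity (q : ℂ) (hq : ‖q‖ < 1)
    (b c d α : ℂ) (hb : b ≠ 0) (hc : c ≠ 0) (hd : d ≠ 0) (hα : α ≠ 0) :
    theta (d / b) q * theta (c / b) q * theta (c * d / α) q * theta α q
      - theta c q * theta d q * theta (α / b) q * theta (c * d / (b * α)) q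
      = c * (theta (c * d / b) q * theta (1 / b) q * theta (d / α) q * theta (α / c) q) := by
  rcases eq_or_ne q 0 with rfl | hq0
  · simp only [theta_zero_right]
    field_simp
    ring
  · exact sub_eq_zero.1 (chuDefect_eq_zero hq hq0 hb hc hd hα)
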